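/- Let M be an n × n binary image whose image graph has C connected components. Then the distance from M to connectedness (minimum number of pixel changes to make the image graph connected) is at least (C - 1)/3. -/

import Mathlib

open Finset

/-- Two pixels are adjacent if they are at Manhattan distance 1. -/
def Adj (p q : ℕ × ℕ) : Prop :=
  (p.1 = q.1 ∧ (p.2 + 1 = q.2 ∨ q.2 + 1 = p.2)) ∨
  (p.2 = q.2 ∧ (p.1 + 1 = q.1 ∨ q.1 + 1 = p.1))

/-- A pixel lies inside the `k × k` square (0-indexed coordinates). -/
def InSquare (k : ℕ) (p : ℕ × ℕ) : Prop := p.1 < k ∧ p.2 < k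

/-- A pixel is on the border of the `k × k` square. -/
def OnBorder (k : ℕ) (p : ℕ × ℕ) : Prop :=
  InSquare k p ∧ (p.1 = 0 ∨ p.1 = k - 1 ∨ p.2 = 0 ∨ p.2 = k - 1)

/-- One step of the image graph of the `k × k` image `s`: both pixels are black,
inside the square and adjacent. -/
def BlackAdj (k : ℕ) (s : ℕ × ℕ → Bool) (p q : ℕ × ℕ) : Prop :=
  InSquare k p ∧ InSquare k q ∧ s p = true ∧ s q = true ∧ Adj p q

/-- A `k × k` image is border-connected if every black pixel is connected, through
black pixels, to a black pixel on the border. -/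
def BorderConnected (k : ℕ) (s : ℕ × ℕ → Bool) : Prop :=
  ∀ p, InSquare k p → s p = true →
    ∃ q, OnBorder k q ∧ s q = true ∧ Relation.ReflTransGen (BlackAdj k s) p q

/-- Number of pixels of the `k × k` square on which `s` and `t` differ. -/
def diffCount (k : ℕ) (s t : ℕ × ℕ → Bool) : ℕ :=
  ((Finset.range k ×ˢ Finset.range k).filter (fun p => s p ≠ t p)).card

/-- Distance of a `k × k` image to border-connectedness. -/
noncomputable def distBC (k : ℕ) (s : ℕ × ℕ → Bool) : ℕ :=
  sInf {d | ∃ t, BorderConnected k t ∧ diffCount k s t = d}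

/-- An `n × n` image is connected if its image graph is connected. -/
def ImgConnected (n : ℕ) (M : ℕ × ℕ → Bool) : Prop :=
  ∀ p q, InSquare n p → InSquare n q → M p = true → M q = true →
    Relation.ReflTransGen (BlackAdj n M) p q

/-- Distance of an `n × n` image to connectedness. -/
noncomputable def distConn (n : ℕ) (M : ℕ × ℕ → Bool) : ℕ :=
  sInf {d | ∃ t, ImgConnected n t ∧ diffCount n M t = d}

/-- The subimage of `s` whose origin is at `(u, v)`. -/
def shiftIm (s : ℕ × ℕ → Bool) (u v : ℕ) : ℕ × ℕ → Bool :=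
  fun p => s (p.1 + u, p.2 + v)

/-- The image graph of an `n × n` image: vertices are black pixels inside the square,
edges connect pixels at Manhattan distance 1. -/
def imageGraph (n : ℕ) (M : ℕ × ℕ → Bool) :
    SimpleGraph {p : ℕ × ℕ // InSquare n p ∧ M p = true} where
  Adj := fun p q => Adj p.1 q.1
  symm := by constructor; intro p q h; unfold Adj at *; omega
  loopless := by constructor; intro p h; unfold Adj at h; omega

/-- The number of connected components of the image graph of an `n × n` image. -/
noncomputable def numComponents (n : ℕ) (M : ℕ × ℕ → Bool) : ℕ :=
  Nat.card (imageGraph n M).ConnectedComponent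

/-!
A single pixel change lowers the number of components by at most three: adding a black pixel
merges the components of its at most four black neighbours, and deleting one creates at most
one new component. A connected image has at most one component, so reaching one from an image
with `C` components takes at least `(C - 1) / 3` changes.
-/

namespace SimpleGraph

variable {V : Type*} (G : SimpleGraph V) {s : Set V} {v : V}

theorem reachable_induce_or_exists_adj_of_reachable_induce_insert {x : s} {y : ↥(insert v s)}
    (h : (G.induce (insert v s)).Reachable (G.induceHomOfLE (Set.subset_insert v s) x) y) :
    (∃ y' : s, G.induceHomOfLE (Set.subset_insert v s) y' = y ∧ (G.induce s).Reachable x y') ∨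
      ∃ w : s, G.Adj w v ∧ (G.induce s).Reachable x w := by
  rw [reachable_iff_reflTransGen] at h
  generalize hx : G.induceHomOfLE _ x = x' at h
  induction h using Relation.ReflTransGen.head_induction_on generalizing x with
  | refl => exact .inl ⟨x, hx, .rfl⟩
  | @head x' u hxu _ ih =>
    subst hx
    by_cases hu : u.1 = v
    · exact .inr ⟨x, hu ▸ hxu, .rfl⟩
    · have hstep : (G.induce s).Reachable x ⟨u.1, u.2.resolve_left hu⟩ := Adj.reachable hxu
      rcases ih (x := ⟨u.1, u.2.resolve_left hu⟩) rfl with ⟨y', hy', hr⟩ | ⟨w, hw, hr⟩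
      · exact .inl ⟨y', hy', hstep.trans hr⟩
      · exact .inr ⟨w, hw, hstep.trans hr⟩

theorem card_connectedComponent_induce_insert_le (hs : s.Finite) :
    Nat.card (G.induce (insert v s)).ConnectedComponent ≤
      Nat.card (G.induce s).ConnectedComponent + 1 := by
  have := hs.to_subtype
  rw [← Finite.card_option]
  refine Nat.card_le_card_of_surjective
    (fun c => c.elim ((G.induce _).connectedComponentMk ⟨v, Set.mem_insert v s⟩)
      (·.map (G.induceHomOfLE (Set.subset_insert v s)).toHom)) ?_
  intro c
  induction c using ConnectedComponent.ind with | h u => ?_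
  rcases u with ⟨u, hu | hu⟩
  · exact ⟨none, by subst hu; rfl⟩
  · exact ⟨some ((G.induce s).connectedComponentMk ⟨u, hu⟩), rfl⟩

theorem card_connectedComponent_induce_add_one_le (hs : s.Finite) (hv : v ∉ s) :
    Nat.card (G.induce s).ConnectedComponent + 1 ≤
      Nat.card (G.induce (insert v s)).ConnectedComponent + (G.neighborSet v ∩ s).ncard := by
  classical
  have := hs.to_subtype
  have := (hs.subset (Set.inter_subset_right (s := G.neighborSet v))).to_subtype
  set ι := G.induceHomOfLE (Set.subset_insert v s)
  set cv := (G.induce (insert v s)).connectedComponentMk ⟨v, Set.mem_insert v s⟩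
  have hfiber : ∀ K : (G.induce s).ConnectedComponent, K.map ι.toHom = cv →
      ∃ w : ↥(G.neighborSet v ∩ s), (G.induce s).connectedComponentMk ⟨w, w.2.2⟩ = K := by
    intro K
    induction K using ConnectedComponent.ind with | h x => ?_
    intro hx
    rcases G.reachable_induce_or_exists_adj_of_reachable_induce_insert
      (ConnectedComponent.exact hx) with ⟨y, hy, -⟩ | ⟨w, hw, hxw⟩
    · have hyv : (y : V) = v := congrArg Subtype.val hy
      exact absurd (hyv ▸ y.2) hv
    · exact ⟨⟨w, G.adj_symm hw, w.2⟩, (ConnectedComponent.sound hxw).symm⟩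
  have hinj : ∀ K K' : (G.induce s).ConnectedComponent,
      K.map ι.toHom = K'.map ι.toHom → K.map ι.toHom ≠ cv → K = K' := by
    intro K K'
    induction K, K' using ConnectedComponent.ind₂ with | h x y => ?_
    intro hxy hx
    rcases G.reachable_induce_or_exists_adj_of_reachable_induce_insert
      (ConnectedComponent.exact hxy) with ⟨y', hy', hxy'⟩ | ⟨w, hw, hxw⟩
    · obtain rfl := ι.injective hy'
      exact ConnectedComponent.sound hxy'
    · have hwv : (G.induce (insert v s)).Adj (ι w) ⟨v, Set.mem_insert v s⟩ := hw
      exact absurd (ConnectedComponent.sound ((hxw.map ι.toHom).trans hwv.reachable)) hx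
  -- Send each component of `s` to its image in `insert v s`, unless that image is the component
  -- of `v`; in that case send it to a neighbour of `v` that it contains.
  choose f hf using hfiber
  let g : Option (G.induce s).ConnectedComponent →
      (G.induce (insert v s)).ConnectedComponent ⊕ ↥(G.neighborSet v ∩ s)
    | none => .inl cv
    | some K => if h : K.map ι.toHom = cv then .inr (f K h) else .inl (K.map ι.toHom)
  have hg : g.Injective := by
    rintro (_ | K) (_ | K') h <;> simp only [g] at h
    · rfl
    · split_ifs at h with h'
      exact absurd (Sum.inl_injective h).symm h'
    · split_ifs at h with h'
      exact absurd (Sum.inl_injective h) h'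
    · split_ifs at h with h₁ h₂ h₂
      · rw [← hf K h₁, ← hf K' h₂, Sum.inr_injective h]
      · rw [hinj K K' (Sum.inl_injective h) h₁]
  calc Nat.card (G.induce s).ConnectedComponent + 1
      = Nat.card (Option (G.induce s).ConnectedComponent) := Finite.card_option.symm
    _ ≤ Nat.card ((G.induce (insert v s)).ConnectedComponent ⊕ ↥(G.neighborSet v ∩ s)) :=
      Nat.card_le_card_of_injective g hg
    _ = _ := by rw [Nat.card_sum, Nat.card_coe_set_eq]

end SimpleGraph

def pixelGraph : SimpleGraph (ℕ × ℕ) where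
  Adj := Adj
  symm := by constructor; intro p q h; unfold Adj at *; omega
  loopless := by constructor; intro p h; unfold Adj at h; omega

def blackPixels (n : ℕ) (M : ℕ × ℕ → Bool) : Set (ℕ × ℕ) := {p | InSquare n p ∧ M p = true}

theorem numComponents_eq_card (n : ℕ) (M : ℕ × ℕ → Bool) :
    numComponents n M = Nat.card (pixelGraph.induce (blackPixels n M)).ConnectedComponent :=
  rfl

theorem blackPixels_finite (n : ℕ) (M : ℕ × ℕ → Bool) : (blackPixels n M).Finite :=
  ((Set.finite_Iio n).prod (Set.finite_Iio n)).subset fun _ hp => hp.1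

section Pixels

variable {n : ℕ} {M M' : ℕ × ℕ → Bool}

theorem ncard_neighborSet_inter_le (p : ℕ × ℕ) (s : Set (ℕ × ℕ)) :
    (pixelGraph.neighborSet p ∩ s).ncard ≤ 4 := by
  let N : Finset (ℕ × ℕ) := {(p.1 + 1, p.2), (p.1 - 1, p.2), (p.1, p.2 + 1), (p.1, p.2 - 1)}
  have hN : pixelGraph.neighborSet p ∩ s ⊆ N := by
    rintro q ⟨hq, -⟩
    simp only [SimpleGraph.mem_neighborSet, pixelGraph, Adj] at hq
    simp only [N, Finset.coe_insert, Finset.coe_singleton, Set.mem_insert_iff,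
      Set.mem_singleton_iff, Prod.ext_iff]
    omega
  calc (pixelGraph.neighborSet p ∩ s).ncard ≤ (N : Set (ℕ × ℕ)).ncard :=
        Set.ncard_le_ncard hN N.finite_toSet
    _ ≤ 4 := by rw [Set.ncard_coe_finset]; exact Finset.card_le_four

theorem numComponents_congr (h : ∀ q, InSquare n q → M q = M' q) :
    numComponents n M = numComponents n M' := by
  have hB : blackPixels n M = blackPixels n M' :=
    Set.ext fun q => and_congr_right fun hq => by rw [h q hq]
  rw [numComponents_eq_card, numComponents_eq_card, hB]

theorem numComponents_le_of_forall_ne_eq {p : ℕ × ℕ} (h : ∀ q, q ≠ p → M q = M' q) :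
    numComponents n M ≤ numComponents n M' + 3 := by
  set S := blackPixels n M \ {p}
  have hS : blackPixels n M' \ {p} = S := by
    ext q
    simp only [S, blackPixels, Set.mem_sdiff, Set.mem_ofPred_eq, Set.mem_singleton_iff]
    by_cases hq : q = p
    · simp [hq]
    · rw [h q hq]
  have hcases : ∀ B : Set (ℕ × ℕ), B \ {p} = S → B = S ∨ B = insert p S := by
    intro B hB
    rw [← hB]
    by_cases hp : p ∈ B
    · exact .inr (by rw [Set.insert_sdiff_singleton, Set.insert_eq_of_mem hp])
    · exact .inl (Set.sdiff_singleton_eq_self hp).symm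
  have hSfin : S.Finite := (blackPixels_finite n M).sdiff
  have hadd := pixelGraph.card_connectedComponent_induce_insert_le (v := p) hSfin
  have hdel := pixelGraph.card_connectedComponent_induce_add_one_le hSfin fun hp => hp.2 rfl
  have hdeg := ncard_neighborSet_inter_le p S
  rw [numComponents_eq_card, numComponents_eq_card]
  rcases hcases _ rfl with hM | hM <;> rcases hcases _ hS with hM' | hM' <;>
    rw [hM, hM'] <;> omega

theorem numComponents_le_add_three_mul_card (D : Finset (ℕ × ℕ))
    (h : ∀ q, InSquare n q → M q ≠ M' q → q ∈ D) :
    numComponents n M ≤ numComponents n M' + 3 * D.card := by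
  induction D using Finset.induction_on generalizing M with
  | empty =>
    rw [numComponents_congr fun q hq => not_not.mp fun hne => by simpa using h q hq hne]
    simp
  | insert p D hp ih =>
    have hupdate := ih (M := Function.update M p (M' p)) fun q hq hne => by
      by_cases hqp : q = p
      · subst hqp
        simp at hne
      · rw [Function.update_of_ne hqp] at hne
        exact (Finset.mem_insert.mp (h q hq hne)).resolve_left hqp
    have hstep := numComponents_le_of_forall_ne_eq (n := n) (M := M)
      (M' := Function.update M p (M' p)) fun q hq => (Function.update_of_ne hq _ _).symm
    rw [Finset.card_insert_of_notMem hp]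
    omega

theorem ImgConnected.preconnected (h : ImgConnected n M) : (imageGraph n M).Preconnected := by
  rintro ⟨p, hp⟩ ⟨q, hq⟩
  induction h p q hp.1 hq.1 hp.2 hq.2 using Relation.ReflTransGen.head_induction_on with
  | refl => rfl
  | @head a b hab _ ih =>
    have hb : InSquare n b ∧ M b = true := ⟨hab.2.1, hab.2.2.2.1⟩
    have hadj : (imageGraph n M).Adj ⟨a, hp⟩ ⟨b, hb⟩ := hab.2.2.2.2
    exact hadj.reachable.trans (ih hb)

theorem numComponents_le_one_of_imgConnected (h : ImgConnected n M) : numComponents n M ≤ 1 :=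
  have := h.preconnected.subsingleton_connectedComponent
  Finite.card_le_one_iff_subsingleton.mpr this

end Pixels

theorem numComponents_le_add_three_mul_diffCount (n : ℕ) (M M' : ℕ × ℕ → Bool) :
    numComponents n M ≤ numComponents n M' + 3 * diffCount n M M' :=
  numComponents_le_add_three_mul_card _ fun _ hq hne => Finset.mem_filter.mpr
    ⟨Finset.mem_product.mpr ⟨Finset.mem_range.mpr hq.1, Finset.mem_range.mpr hq.2⟩, hne⟩

theorem dist_to_connectedness_ge_components_general (n : ℕ) (M : ℕ × ℕ → Bool) :
    ((distConn n M : ℝ)) ≥ ((numComponents n M : ℝ) - 1) / 3 := by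
  obtain ⟨t, ht, hd⟩ : distConn n M ∈ {d | ∃ t, ImgConnected n t ∧ diffCount n M t = d} :=
    Nat.sInf_mem ⟨_, fun _ => false, fun _ _ _ _ hp => absurd hp Bool.false_ne_true, rfl⟩
  have hM : (numComponents n M : ℝ) ≤ numComponents n t + 3 * distConn n M := by
    exact_mod_cast hd ▸ numComponents_le_add_three_mul_diffCount n M t
  have ht1 : (numComponents n t : ℝ) ≤ 1 := by
    exact_mod_cast numComponents_le_one_of_imgConnected ht
  rw [ge_iff_le, div_le_iff₀ three_pos]
  linarith

/-- If the image graph of an `n × n` image `M` has `C ≥ 1` connected components,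
then the distance from `M` to connectedness is at least `(C - 1)/3`. -/
theorem dist_to_connectedness_ge_components (n : ℕ) (M : ℕ × ℕ → Bool)
    (h : 1 ≤ numComponents n M) :
    ((distConn n M : ℝ)) ≥ ((numComponents n M : ℝ) - 1) / 3 :=
  dist_to_connectedness_ge_components_general n M
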